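/- Let $(\Omega,\mathcal F,\mathbb P)$ be a probability space and let $(Z_k)_{k\in\mathbb N}$ be a sequence of random variables with values in $[0,1]$ converging almost surely to a $[0,1]$-valued random variable $Z$. If $\lim_{k\to\infty}\mathbb E[Z_k^k]=\mathbb E[\mathbf 1_{\{Z=1\}}]$, then for every real $p\geq 1$ one has $\lim_{k\to\infty}\mathbb E\big[|Z_k^k-\mathbf 1_{\{Z=1\}}|^p\big]=0$; that is, $Z_k^k$ converges to $\mathbf 1_{\{Z=1\}}$ in $L^p$ as $k\to\infty$. -/
import Mathlib


open MeasureTheory Filter Set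

/-- If `[0,1]`-valued random variables `Z k` converge a.s. to a `[0,1]`-valued `Z`, and
`E[Z_k ^ k] → E[1_{Z = 1}]`, then `Z_k ^ k → 1_{Z = 1}` in `L^p` for every real `p ≥ 1`. -/
theorem stmt_0 {Ω : Type*} [MeasurableSpace Ω] (P : Measure Ω) [IsProbabilityMeasure P]
    (Z : ℕ → Ω → ℝ) (Zlim : Ω → ℝ)
    (hZm : ∀ k, Measurable (Z k)) (hZlm : Measurable Zlim)
    (hZ01 : ∀ k ω, Z k ω ∈ Set.Icc (0 : ℝ) 1)
    (hZl01 : ∀ ω, Zlim ω ∈ Set.Icc (0 : ℝ) 1)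
    (hconv : ∀ᵐ ω ∂P, Tendsto (fun k => Z k ω) atTop (nhds (Zlim ω)))
    (hE : Tendsto (fun k => ∫ ω, (Z k ω) ^ k ∂P) atTop
      (nhds (∫ ω, ({ω | Zlim ω = 1}).indicator (fun _ => (1 : ℝ)) ω ∂P))) :
    ∀ p : ℝ, 1 ≤ p →
      Tendsto
        (fun k => ∫ ω, |(Z k ω) ^ k - ({ω | Zlim ω = 1}).indicator (fun _ => (1 : ℝ)) ω| ^ p ∂P)
        atTop (nhds 0) := by
  intro p hp
  set S : Set Ω := {ω | Zlim ω = 1} with hS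
  have hSm : MeasurableSet S := hZlm (measurableSet_singleton 1)
  set g : Ω → ℝ := S.indicator (fun _ => 1) with hg
  have hgm : Measurable g := measurable_const.indicator hSm
  set f : ℕ → Ω → ℝ := fun k ω => Z k ω ^ k with hf
  have hfm : ∀ k, Measurable (f k) := fun k => (hZm k).pow_const k
  have hf01 : ∀ k ω, f k ω ∈ Icc (0:ℝ) 1 := by
    intro k ω
    exact ⟨pow_nonneg (hZ01 k ω).1 k, pow_le_one₀ (hZ01 k ω).1 (hZ01 k ω).2⟩
  have hg01 : ∀ ω, g ω ∈ Icc (0:ℝ) 1 := by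
    intro ω
    by_cases h : ω ∈ S <;> simp [hg, h]
  -- integrability helpers
  have hint : ∀ (u : Ω → ℝ), Measurable u → (∀ ω, |u ω| ≤ 1) → Integrable u P := by
    intro u hm hb
    exact (integrable_const (1:ℝ)).mono' hm.aestronglyMeasurable (Filter.Eventually.of_forall hb)
  have hfint : ∀ k, Integrable (f k) P := fun k =>
    hint _ (hfm k) (fun ω => abs_le.2 ⟨by linarith [(hf01 k ω).1], (hf01 k ω).2⟩)
  have hgint : Integrable g P :=
    hint _ hgm (fun ω => abs_le.2 ⟨by linarith [(hg01 ω).1], (hg01 ω).2⟩)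
  -- the indicator-restricted part tends to 0
  have hA : Tendsto (fun k => ∫ ω, (Sᶜ).indicator (f k) ω ∂P) atTop (nhds (∫ _ω, (0:ℝ) ∂P)) := by
    apply tendsto_integral_of_dominated_convergence (fun _ => (1:ℝ))
    · intro k
      exact ((hfm k).indicator hSm.compl).aestronglyMeasurable
    · exact integrable_const 1
    · intro k
      refine Filter.Eventually.of_forall fun ω => ?_
      by_cases h : ω ∈ Sᶜ
      · simp only [Set.indicator_of_mem h]
        rw [Real.norm_eq_abs]
        exact abs_le.2 ⟨by linarith [(hf01 k ω).1], (hf01 k ω).2⟩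
      · simp [Set.indicator_of_notMem h]
    · filter_upwards [hconv] with ω hω
      by_cases h : ω ∈ S
      · have : ∀ k, (Sᶜ).indicator (f k) ω = 0 := fun k =>
          Set.indicator_of_notMem (by simpa using h) _
        simp only [this]
        exact tendsto_const_nhds
      · have hlt : Zlim ω < 1 := lt_of_le_of_ne (hZl01 ω).2 h
        have heq : ∀ k, (Sᶜ).indicator (f k) ω = f k ω := fun k =>
          Set.indicator_of_mem (Set.mem_compl h) _
        simp only [heq]
        -- f k ω = Z k ω ^ k → 0
        set c : ℝ := (Zlim ω + 1) / 2 with hc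
        have hL0 : 0 ≤ Zlim ω := (hZl01 ω).1
        have hc1 : c < 1 := by rw [hc]; linarith
        have hLc : Zlim ω < c := by rw [hc]; linarith
        have hc0 : 0 ≤ c := by rw [hc]; linarith
        have hev : ∀ᶠ k in atTop, Z k ω < c := hω.eventually_lt_const hLc
        apply squeeze_zero' (Filter.Eventually.of_forall fun k => (hf01 k ω).1)
          (hev.mono fun k hk => pow_le_pow_left₀ (hZ01 k ω).1 hk.le k)
        exact tendsto_pow_atTop_nhds_zero_of_lt_one hc0 hc1
  rw [integral_const, smul_zero] at hA
  -- L¹ convergence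
  have hL1 : Tendsto (fun k => ∫ ω, |f k ω - g ω| ∂P) atTop (nhds 0) := by
    have hid : ∀ k, (fun ω => |f k ω - g ω|) =
        fun ω => g ω - f k ω + 2 * (Sᶜ).indicator (f k) ω := by
      intro k
      funext ω
      by_cases h : ω ∈ S
      · rw [Set.indicator_of_notMem (by simpa using h), hg,
          Set.indicator_of_mem h]
        rw [abs_of_nonpos (by linarith [(hf01 k ω).2])]
        ring
      · rw [Set.indicator_of_mem (Set.mem_compl h), hg, Set.indicator_of_notMem h]
        rw [sub_zero, abs_of_nonneg (hf01 k ω).1]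
        ring
    have hintind : ∀ k, Integrable ((Sᶜ).indicator (f k)) P :=
      fun k => (hfint k).indicator hSm.compl
    have : ∀ k, ∫ ω, |f k ω - g ω| ∂P =
        (∫ ω, g ω ∂P) - (∫ ω, f k ω ∂P) + 2 * ∫ ω, (Sᶜ).indicator (f k) ω ∂P := by
      intro k
      rw [hid k]
      have h1 : Integrable (fun ω => g ω - f k ω) P := hgint.sub (hfint k)
      have h2 : Integrable (fun ω => 2 * (Sᶜ).indicator (f k) ω) P :=
        (hintind k).const_mul 2
      rw [integral_add h1 h2, integral_sub hgint (hfint k), integral_const_mul]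
    simp only [this]
    have h3 : Tendsto (fun k => (∫ ω, g ω ∂P) - (∫ ω, f k ω ∂P)
        + 2 * ∫ ω, (Sᶜ).indicator (f k) ω ∂P) atTop
        (nhds ((∫ ω, g ω ∂P) - (∫ ω, g ω ∂P) + 2 * 0)) :=
      (tendsto_const_nhds.sub hE).add (hA.const_mul 2)
    simpa using h3
  -- squeeze for L^p
  have hp0 : p ≠ 0 := by positivity
  have habs01 : ∀ k ω, |f k ω - g ω| ∈ Icc (0:ℝ) 1 := by
    intro k ω
    refine ⟨abs_nonneg _, abs_le.2 ⟨?_, ?_⟩⟩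
    · linarith [(hf01 k ω).1, (hg01 ω).2]
    · linarith [(hf01 k ω).2, (hg01 ω).1]
  have hmono : ∀ k, (∫ ω, |f k ω - g ω| ^ p ∂P) ≤ ∫ ω, |f k ω - g ω| ∂P := by
    intro k
    apply integral_mono_of_nonneg
    · exact Filter.Eventually.of_forall fun ω => Real.rpow_nonneg (abs_nonneg _) p
    · exact (hfint k).sub hgint |>.abs
    · refine Filter.Eventually.of_forall fun ω => ?_
      show |f k ω - g ω| ^ p ≤ |f k ω - g ω|
      rcases eq_or_lt_of_le (habs01 k ω).1 with h0 | h0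
      · rw [← h0, Real.zero_rpow hp0]
      · calc |f k ω - g ω| ^ p ≤ |f k ω - g ω| ^ (1:ℝ) :=
              Real.rpow_le_rpow_of_exponent_ge h0 (habs01 k ω).2 hp
          _ = |f k ω - g ω| := Real.rpow_one _
  have hnn : ∀ k, 0 ≤ ∫ ω, |f k ω - g ω| ^ p ∂P := fun k =>
    integral_nonneg fun ω => Real.rpow_nonneg (abs_nonneg _) p
  exact squeeze_zero hnn hmono hL1
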